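/- arXiv:2605.24057 — 2 statements merged into one kernel-verified Lean document; each statement's English description precedes it below -/
import Mathlib

section
/- At the symmetric collapsed state where μ_1 = … = μ_K = E[z], the Hessian of the negative log-likelihood L(μ) = -E_z[LSE_k(-(β/2)‖z-μ_k‖²)] equals (β/K)δ_{kl}δ^{ab} - (β²/K)(δ_{kl} - 1/K)Σ^{ab}, where Σ = Cov(z). -/
/-!
Per sample, `∂/∂μ_k^a log ∑_j exp(-(β/2)‖z - μ_j‖²) = r_k β (z^a - μ_k^a)`, where `r` is the
softmax of the logits (the responsibilities), and differentiating once more gives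
`β² r_k (δ_kl - r_l) (z^a - μ_k^a)(z^b - μ_l^b) - β r_k δ_kl δ^{ab}`.
At a collapsed state all logits agree, so `r ≡ 1/K` and the expectation of the second
derivative is the stated matrix. Both derivatives pass under the expectation by dominated
differentiation: since `0 ≤ r ≤ 1`, on a unit ball of prototypes they are bounded by quadratic
polynomials in `|z|`, which are integrable by the second-moment assumption.
-/

open Real MeasureTheory Metric

lemma fderiv_integral_apply_of_dominated {Ω E : Type*} [MeasurableSpace Ω] {P : Measure Ω}
    [NormedAddCommGroup E] [NormedSpace ℝ E] {F : E → Ω → ℝ} {F' : E → Ω → E →L[ℝ] ℝ}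
    {x₀ : E} {bound : Ω → ℝ} (hF_meas : ∀ x, AEStronglyMeasurable (F x) P)
    (hF_int : Integrable (F x₀) P) (hF'_meas : AEStronglyMeasurable (F' x₀) P)
    (h_bound : ∀ ω, ∀ x ∈ ball x₀ 1, ‖F' x ω‖ ≤ bound ω) (hbound : Integrable bound P)
    (h_diff : ∀ ω x, HasFDerivAt (F · ω) (F' x ω) x) (v : E) :
    fderiv ℝ (fun x => ∫ ω, F x ω ∂P) x₀ v = ∫ ω, F' x₀ ω v ∂P := by
  have hF'_int : Integrable (F' x₀) P :=
    hbound.mono' hF'_meas (ae_of_all _ fun ω => h_bound ω x₀ (mem_ball_self one_pos))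
  rw [(hasFDerivAt_integral_of_dominated_of_fderiv_le (ball_mem_nhds x₀ one_pos)
    (.of_forall hF_meas) hF_int hF'_meas (ae_of_all _ h_bound) hbound
    (ae_of_all _ fun ω x _ => h_diff ω x)).fderiv]
  exact ContinuousLinearMap.integral_apply hF'_int v

section Softmax

variable {ι : Type*} [Fintype ι]

noncomputable def softmax (u : ι → ℝ) (j : ι) : ℝ :=
  exp (u j) / ∑ i, exp (u i)

lemma sum_exp_pos [Nonempty ι] (u : ι → ℝ) : 0 < ∑ i, exp (u i) :=
  Finset.sum_pos (fun i _ => exp_pos (u i)) Finset.univ_nonempty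

lemma softmax_nonneg (u : ι → ℝ) (j : ι) : 0 ≤ softmax u j := by
  unfold softmax; positivity

lemma sum_softmax [Nonempty ι] (u : ι → ℝ) : ∑ j, softmax u j = 1 := by
  simp_rw [softmax, ← Finset.sum_div]
  exact div_self (sum_exp_pos u).ne'

lemma softmax_const (r : ℝ) (j : ι) : softmax (fun _ => r) j = 1 / Fintype.card ι := by
  have : Nonempty ι := ⟨j⟩
  have hcard : (Fintype.card ι : ℝ) ≠ 0 := Nat.cast_ne_zero.2 Fintype.card_ne_zero
  simp only [softmax, Finset.sum_const, Finset.card_univ, nsmul_eq_mul]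
  field_simp

lemma softmax_le_one (u : ι → ℝ) (j : ι) : softmax u j ≤ 1 := by
  have : Nonempty ι := ⟨j⟩
  exact div_le_one_of_le₀
    (Finset.single_le_sum (fun i _ => (exp_pos (u i)).le) (Finset.mem_univ j))
    (sum_exp_pos u).le

lemma softmax_eq_exp_sub_log [Nonempty ι] (u : ι → ℝ) (j : ι) :
    softmax u j = exp (u j - log (∑ i, exp (u i))) := by
  rw [exp_sub, exp_log (sum_exp_pos u), softmax]

@[fun_prop]
lemma continuous_softmax (j : ι) : Continuous fun u : ι → ℝ => softmax u j := by
  have : Nonempty ι := ⟨j⟩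
  exact Continuous.div (by fun_prop) (by fun_prop) fun u => (sum_exp_pos u).ne'

lemma norm_sum_softmax_smul_le [Nonempty ι] {F : Type*} [SeminormedAddCommGroup F]
    [NormedSpace ℝ F] (u : ι → ℝ) {v : ι → F} {B : ℝ} (hv : ∀ j, ‖v j‖ ≤ B) :
    ‖∑ j, softmax u j • v j‖ ≤ B :=
  calc ‖∑ j, softmax u j • v j‖ ≤ ∑ j, softmax u j * B := by
        refine (norm_sum_le _ _).trans (Finset.sum_le_sum fun j _ => ?_)
        rw [norm_smul, norm_of_nonneg (softmax_nonneg u j)]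
        exact mul_le_mul_of_nonneg_left (hv j) (softmax_nonneg u j)
    _ = B := by rw [← Finset.sum_mul, sum_softmax, one_mul]

lemma abs_log_sum_exp_le [Nonempty ι] (u : ι → ℝ) :
    |log (∑ j, exp (u j))| ≤ log (Fintype.card ι) + ∑ j, |u j| := by
  set S := ∑ j, |u j|
  have hu : ∀ j, |u j| ≤ S := fun j =>
    Finset.single_le_sum (f := fun j => |u j|) (fun j _ => abs_nonneg _) (Finset.mem_univ j)
  have hcard : 0 ≤ log (Fintype.card ι) := log_nonneg (by exact_mod_cast Fintype.card_pos)
  obtain ⟨j₀⟩ := ‹Nonempty ι›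
  have hlower : u j₀ ≤ log (∑ j, exp (u j)) := (le_log_iff_exp_le (sum_exp_pos u)).2 <|
    Finset.single_le_sum (fun j _ => (exp_pos (u j)).le) (Finset.mem_univ j₀)
  have hupper : log (∑ j, exp (u j)) ≤ log (Fintype.card ι) + S :=
    calc log (∑ j, exp (u j)) ≤ log (∑ _j : ι, exp S) := log_le_log (sum_exp_pos u) <|
          Finset.sum_le_sum fun j _ => exp_le_exp.2 ((le_abs_self _).trans (hu j))
      _ = log (Fintype.card ι) + S := by
        rw [Finset.sum_const, Finset.card_univ, nsmul_eq_mul,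
          log_mul (by exact_mod_cast Fintype.card_ne_zero) (exp_pos S).ne', log_exp]
  rw [abs_le]
  constructor <;> linarith [neg_abs_le (u j₀), hu j₀]

variable {E : Type*} [NormedAddCommGroup E] [NormedSpace ℝ E] [Nonempty ι]
  {u : ι → E → ℝ} {u' : ι → E →L[ℝ] ℝ} {x : E}

lemma hasFDerivAt_log_sum_exp (hu : ∀ j, HasFDerivAt (u j) (u' j) x) :
    HasFDerivAt (fun y => log (∑ j, exp (u j y)))
      (∑ j, softmax (fun j => u j x) j • u' j) x := by
  refine ((HasFDerivAt.fun_sum fun j _ => (hu j).exp).log (sum_exp_pos _).ne').congr_fderiv ?_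
  simp_rw [Finset.smul_sum, smul_smul, softmax, div_eq_inv_mul]

lemma hasFDerivAt_softmax (hu : ∀ j, HasFDerivAt (u j) (u' j) x) (k : ι) :
    HasFDerivAt (fun y => softmax (fun j => u j y) k)
      (softmax (fun j => u j x) k • (u' k - ∑ j, softmax (fun j => u j x) j • u' j)) x := by
  have h := ((hu k).fun_sub (hasFDerivAt_log_sum_exp hu)).exp
  rw [← softmax_eq_exp_sub_log (fun j => u j x)] at h
  exact h.congr_of_eventuallyEq (.of_forall fun y => softmax_eq_exp_sub_log (fun j => u j y) k)

end Softmax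

section Prototypes

variable {d K : ℕ}

noncomputable def entryCLM (j : Fin K) (i : Fin d) : (Fin K → Fin d → ℝ) →L[ℝ] ℝ :=
  (ContinuousLinearMap.proj (R := ℝ) (φ := fun _ : Fin d => ℝ) i).comp
    (ContinuousLinearMap.proj (R := ℝ) (φ := fun _ : Fin K => Fin d → ℝ) j)

@[simp]
lemma entryCLM_apply (j : Fin K) (i : Fin d) (m : Fin K → Fin d → ℝ) :
    entryCLM j i m = m j i := rfl

lemma abs_apply_apply_le_norm (m : Fin K → Fin d → ℝ) (j : Fin K) (i : Fin d) :
    |m j i| ≤ ‖m‖ :=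
  (norm_le_pi_norm (m j) i).trans (norm_le_pi_norm m j)

lemma norm_entryCLM_le (j : Fin K) (i : Fin d) : ‖entryCLM j i‖ ≤ 1 :=
  ContinuousLinearMap.opNorm_le_bound _ zero_le_one fun m => by
    simpa using abs_apply_apply_le_norm m j i

variable (β : ℝ) (c : Fin d → ℝ)

noncomputable def logit (m : Fin K → Fin d → ℝ) (j : Fin K) : ℝ :=
  -(β / 2) * ∑ i, (c i - m j i) ^ 2

noncomputable def logitGrad (m : Fin K → Fin d → ℝ) (j : Fin K) :
    (Fin K → Fin d → ℝ) →L[ℝ] ℝ :=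
  β • ∑ i, (c i - m j i) • entryCLM j i

lemma hasFDerivAt_logit (m : Fin K → Fin d → ℝ) (j : Fin K) :
    HasFDerivAt (fun m' => logit β c m' j) (logitGrad β c m j) m := by
  unfold logit
  refine ((HasFDerivAt.fun_sum fun i _ =>
    ((entryCLM j i).hasFDerivAt.const_sub (c i)).pow 2).const_mul (-(β / 2))).congr_fderiv ?_
  ext v
  simp only [entryCLM_apply, Nat.add_one_sub_one, pow_one, nsmul_eq_mul, Nat.cast_ofNat, smul_neg,
    Finset.sum_neg_distrib, neg_smul, neg_neg, smul_apply, sum_apply, smul_eq_mul, Finset.mul_sum,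
    logitGrad]
  ring_nf

lemma logitGrad_apply_single (m : Fin K → Fin d → ℝ) (j l : Fin K) (b : Fin d) :
    logitGrad β c m j (Pi.single l (Pi.single b 1)) =
      if j = l then β * (c b - m j b) else 0 := by
  by_cases hjl : j = l
  · subst hjl
    simp [logitGrad, Pi.single_apply]
  · simp [logitGrad, hjl]

lemma norm_logitGrad_le {m : Fin K → Fin d → ℝ} {R : ℝ} (hm : ‖m‖ ≤ R) (j : Fin K) :
    ‖logitGrad β c m j‖ ≤ |β| * ∑ i, (|c i| + R) := by
  rw [logitGrad, norm_smul, norm_eq_abs]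
  refine mul_le_mul_of_nonneg_left ((norm_sum_le _ _).trans (Finset.sum_le_sum fun i _ => ?_))
    (abs_nonneg β)
  rw [norm_smul, norm_eq_abs]
  have hcm : |c i - m j i| ≤ |c i| + R :=
    (abs_sub _ _).trans (by linarith [abs_apply_apply_le_norm m j i])
  simpa using mul_le_mul hcm (norm_entryCLM_le j i) (norm_nonneg _)
    (by linarith [abs_nonneg (c i), norm_nonneg m])

end Prototypes

section LogLikelihood

variable {d K : ℕ} (β : ℝ) (c : Fin d → ℝ)

noncomputable def logLik (m : Fin K → Fin d → ℝ) : ℝ :=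
  log (∑ j, exp (logit β c m j))

noncomputable def logLikGrad (m : Fin K → Fin d → ℝ) : (Fin K → Fin d → ℝ) →L[ℝ] ℝ :=
  ∑ j, softmax (logit β c m) j • logitGrad β c m j

noncomputable def logLikPartial (k : Fin K) (a : Fin d) (m : Fin K → Fin d → ℝ) : ℝ :=
  softmax (logit β c m) k * (β * (c a - m k a))

noncomputable def logLikPartialGrad (k : Fin K) (a : Fin d) (m : Fin K → Fin d → ℝ) :
    (Fin K → Fin d → ℝ) →L[ℝ] ℝ :=
  (β * (c a - m k a)) • (softmax (logit β c m) k • (logitGrad β c m k - logLikGrad β c m))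
    - (softmax (logit β c m) k * β) • entryCLM k a

lemma hasFDerivAt_logLik [NeZero K] (m : Fin K → Fin d → ℝ) :
    HasFDerivAt (logLik β c) (logLikGrad β c m) m :=
  hasFDerivAt_log_sum_exp fun j => hasFDerivAt_logit β c m j

lemma logLikGrad_apply_single (m : Fin K → Fin d → ℝ) (k : Fin K) (a : Fin d) :
    logLikGrad β c m (Pi.single k (Pi.single a 1)) = logLikPartial β c k a m := by
  simp [logLikGrad, logLikPartial, logitGrad_apply_single]

lemma hasFDerivAt_logLikPartial [NeZero K] (k : Fin K) (a : Fin d) (m : Fin K → Fin d → ℝ) :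
    HasFDerivAt (logLikPartial β c k a) (logLikPartialGrad β c k a m) m := by
  have hsoft := hasFDerivAt_softmax (fun j => hasFDerivAt_logit β c m j) k
  have haffine : HasFDerivAt (fun m' : Fin K → Fin d → ℝ => β * (c a - m' k a))
      (β • -entryCLM k a) m :=
    ((entryCLM k a).hasFDerivAt.const_sub (c a)).const_mul β
  refine (hsoft.mul haffine).congr_fderiv ?_
  rw [logLikPartialGrad, logLikGrad]
  module

lemma norm_logLikGrad_le [NeZero K] {m : Fin K → Fin d → ℝ} {R : ℝ} (hm : ‖m‖ ≤ R) :
    ‖logLikGrad β c m‖ ≤ |β| * ∑ i, (|c i| + R) :=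
  norm_sum_softmax_smul_le _ fun j => norm_logitGrad_le β c hm j

lemma norm_logLikPartialGrad_le [NeZero K] {m : Fin K → Fin d → ℝ} {R : ℝ} (hm : ‖m‖ ≤ R)
    (k : Fin K) (a : Fin d) :
    ‖logLikPartialGrad β c k a m‖ ≤ 2 * β ^ 2 * ((|c a| + R) * ∑ i, (|c i| + R)) + |β| := by
  set s := softmax (logit β c m) k
  have hs : |s| ≤ 1 := abs_le.2 ⟨by linarith [softmax_nonneg (logit β c m) k],
    softmax_le_one _ k⟩
  have hca : |β * (c a - m k a)| ≤ |β| * (|c a| + R) := by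
    rw [abs_mul]
    exact mul_le_mul_of_nonneg_left
      ((abs_sub _ _).trans (by linarith [abs_apply_apply_le_norm m k a])) (abs_nonneg β)
  have hdiff : ‖logitGrad β c m k - logLikGrad β c m‖ ≤ 2 * (|β| * ∑ i, (|c i| + R)) :=
    (norm_sub_le _ _).trans (by linarith [norm_logitGrad_le β c hm k, norm_logLikGrad_le β c hm])
  calc ‖logLikPartialGrad β c k a m‖
      ≤ |β * (c a - m k a)| * (|s| * ‖logitGrad β c m k - logLikGrad β c m‖)
        + |s| * |β| * ‖entryCLM k a‖ := by
        refine (norm_sub_le _ _).trans ?_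
        simp only [norm_smul, norm_eq_abs, abs_mul]
        rfl
    _ ≤ |β| * (|c a| + R) * (1 * (2 * (|β| * ∑ i, (|c i| + R)))) + 1 * |β| * 1 := by
        gcongr
        · exact mul_nonneg (abs_nonneg β) (add_nonneg (abs_nonneg _) ((norm_nonneg m).trans hm))
        · exact norm_entryCLM_le k a
    _ = 2 * β ^ 2 * ((|c a| + R) * ∑ i, (|c i| + R)) + |β| := by
        rw [← sq_abs β]; ring

end LogLikelihood

section Continuity

variable {d K : ℕ} (β : ℝ) (m : Fin K → Fin d → ℝ)

lemma continuous_logLik [NeZero K] : Continuous fun c => logLik β c m :=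
  Continuous.log (by unfold logit; fun_prop) fun c => (sum_exp_pos _).ne'

lemma continuous_logLikGrad : Continuous fun c => logLikGrad β c m := by
  unfold logLikGrad logitGrad logit; fun_prop

lemma continuous_logLikPartial (k : Fin K) (a : Fin d) :
    Continuous fun c => logLikPartial β c k a m := by
  unfold logLikPartial logit; fun_prop

lemma continuous_logLikPartialGrad (k : Fin K) (a : Fin d) :
    Continuous fun c => logLikPartialGrad β c k a m := by
  unfold logLikPartialGrad logLikGrad logitGrad logit; fun_prop

end Continuity

lemma logLikPartialGrad_apply_single_const {d K : ℕ} (β : ℝ) (c μ : Fin d → ℝ) (k l : Fin K)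
    (a b : Fin d) :
    logLikPartialGrad β c k a (fun _ => μ) (Pi.single l (Pi.single b 1)) =
      β ^ 2 / K * ((if k = l then 1 else 0) - 1 / K) * ((c a - μ a) * (c b - μ b))
        - β / K * (if k = l then 1 else 0) * (if a = b then 1 else 0) := by
  have hsoft : softmax (logit β c fun _ : Fin K => μ) = fun _ => 1 / (K : ℝ) := by
    funext j
    exact (softmax_const _ j).trans (by rw [Fintype.card_fin])
  simp only [logLikPartialGrad, logLikGrad, hsoft, sub_apply, smul_apply, sum_apply, smul_eq_mul,
    logitGrad_apply_single, entryCLM_apply, mul_ite, mul_zero, Finset.sum_ite_eq',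
    Finset.mem_univ, if_true, Pi.single_apply, ite_apply, Pi.zero_apply]
  split_ifs <;> ring

section Expectation

variable {d K : ℕ} [NeZero K] {Ω : Type*} [MeasurableSpace Ω] {P : Measure Ω}
  [IsFiniteMeasure P] {z : Ω → Fin d → ℝ} (β : ℝ)

lemma memLp_sum_abs_add (hL2 : ∀ i, MemLp (fun ω => z ω i) 2 P) (R : ℝ) :
    MemLp (fun ω => ∑ i, (|z ω i| + R)) 2 P :=
  memLp_finsetSum _ fun i _ => (hL2 i).abs.add (memLp_const R)

lemma integrable_logLik (hz : AEStronglyMeasurable z P) (hL2 : ∀ i, MemLp (fun ω => z ω i) 2 P)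
    (m : Fin K → Fin d → ℝ) : Integrable (fun ω => logLik β (z ω) m) P := by
  have hlogit : ∀ j, Integrable (fun ω => logit β (z ω) m j) P := fun j =>
    (integrable_finsetSum _ fun i _ => ((hL2 i).sub (memLp_const (m j i))).integrable_sq).const_mul _
  exact ((integrable_const _).add (integrable_finsetSum _ fun j _ => (hlogit j).abs)).mono'
    ((continuous_logLik β m).comp_aestronglyMeasurable hz)
    (ae_of_all _ fun ω => abs_log_sum_exp_le _)

lemma integrable_logLikGrad (hz : AEStronglyMeasurable z P)
    (hL2 : ∀ i, MemLp (fun ω => z ω i) 2 P) (m : Fin K → Fin d → ℝ) :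
    Integrable (fun ω => logLikGrad β (z ω) m) P :=
  (((memLp_sum_abs_add hL2 ‖m‖).integrable one_le_two).const_mul |β|).mono'
    ((continuous_logLikGrad β m).comp_aestronglyMeasurable hz)
    (ae_of_all _ fun ω => norm_logLikGrad_le β (z ω) le_rfl)

lemma fderiv_integral_logLik_apply_single (hz : AEStronglyMeasurable z P)
    (hL2 : ∀ i, MemLp (fun ω => z ω i) 2 P) (m : Fin K → Fin d → ℝ) (k : Fin K) (a : Fin d) :
    fderiv ℝ (fun m' => ∫ ω, logLik β (z ω) m' ∂P) m (Pi.single k (Pi.single a 1)) =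
      ∫ ω, logLikPartial β (z ω) k a m ∂P := by
  rw [fderiv_integral_apply_of_dominated (F := fun m' ω => logLik β (z ω) m')
    (bound := fun ω => |β| * ∑ i, (|z ω i| + (‖m‖ + 1)))
    (fun m' => (continuous_logLik β m').comp_aestronglyMeasurable hz)
    (integrable_logLik β hz hL2 m) ((continuous_logLikGrad β m).comp_aestronglyMeasurable hz)
    (fun ω m' hm' => norm_logLikGrad_le β (z ω) (norm_lt_of_mem_ball hm').le)
    (((memLp_sum_abs_add hL2 _).integrable one_le_two).const_mul |β|)
    (fun ω m' => hasFDerivAt_logLik β (z ω) m')]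
  simp_rw [logLikGrad_apply_single]

lemma fderiv_integral_logLikPartial_apply (hz : AEStronglyMeasurable z P)
    (hL2 : ∀ i, MemLp (fun ω => z ω i) 2 P) (k : Fin K) (a : Fin d) (m v : Fin K → Fin d → ℝ) :
    fderiv ℝ (fun m' => ∫ ω, logLikPartial β (z ω) k a m' ∂P) m v =
      ∫ ω, logLikPartialGrad β (z ω) k a m v ∂P := by
  have hint : Integrable (fun ω => logLikPartial β (z ω) k a m) P := by
    simpa only [logLikGrad_apply_single] using
      (integrable_logLikGrad β hz hL2 m).apply_continuousLinearMap (Pi.single k (Pi.single a 1))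
  exact fderiv_integral_apply_of_dominated (F := fun m' ω => logLikPartial β (z ω) k a m')
    (bound := fun ω => 2 * β ^ 2 * ((|z ω a| + (‖m‖ + 1)) * ∑ i, (|z ω i| + (‖m‖ + 1))) + |β|)
    (fun m' => (continuous_logLikPartial β m' k a).comp_aestronglyMeasurable hz) hint
    ((continuous_logLikPartialGrad β m k a).comp_aestronglyMeasurable hz)
    (fun ω m' hm' => norm_logLikPartialGrad_le β (z ω) (norm_lt_of_mem_ball hm').le k a)
    (((((hL2 a).abs.add (memLp_const _)).integrable_mul (memLp_sum_abs_add hL2 _)).const_mul _).add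
      (integrable_const _))
    (fun ω m' => hasFDerivAt_logLikPartial β (z ω) k a m') v

end Expectation

theorem hessian_at_symmetric_state_general {Ω : Type*} [MeasurableSpace Ω]
    (P : Measure Ω) [IsProbabilityMeasure P]
    (d K : ℕ) (β : ℝ)
    (z : Ω → Fin d → ℝ)
    (hint1 : ∀ a, Integrable (fun ω => z ω a) P)
    (hint2 : ∀ a b, Integrable (fun ω => z ω a * z ω b) P)
    (zbar : Fin d → ℝ)
    (Sig : Matrix (Fin d) (Fin d) ℝ)
    (hSig : ∀ a b, Sig a b = ∫ ω, (z ω a - zbar a) * (z ω b - zbar b) ∂P)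
    (k l : Fin K) (a b : Fin d) :
    fderiv ℝ (fun m : Fin K → Fin d → ℝ =>
        fderiv ℝ (fun m' : Fin K → Fin d → ℝ =>
            -∫ ω, Real.log (∑ j, Real.exp (-(β / 2) * ∑ i, (z ω i - m' j i) ^ 2)) ∂P) m
          (Pi.single k (Pi.single a 1)))
      (fun _ => zbar) (Pi.single l (Pi.single b 1))
      = (β / (K : ℝ)) * (if k = l then (1:ℝ) else 0) * (if a = b then (1:ℝ) else 0)
        - (β ^ 2 / (K : ℝ)) * ((if k = l then (1:ℝ) else 0) - 1 / (K : ℝ)) * Sig a b := by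
  have : NeZero K := ⟨k.pos.ne'⟩
  have hz : AEStronglyMeasurable z P :=
    (aemeasurable_pi_lambda z fun i => (hint1 i).aemeasurable).aestronglyMeasurable
  have hL2 : ∀ i, MemLp (fun ω => z ω i) 2 P := fun i =>
    (memLp_two_iff_integrable_sq (hint1 i).1).2 (by simpa only [sq] using hint2 i i)
  have hcov : Integrable (fun ω => (z ω a - zbar a) * (z ω b - zbar b)) P :=
    ((hL2 a).sub (memLp_const _)).integrable_mul ((hL2 b).sub (memLp_const _))
  change fderiv ℝ (fun m => fderiv ℝ (fun m' => -∫ ω, logLik β (z ω) m' ∂P) m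
    (Pi.single k (Pi.single a 1))) (fun _ => zbar) (Pi.single l (Pi.single b 1)) = _
  simp only [fderiv_fun_neg, neg_apply,
    fderiv_integral_logLik_apply_single β hz hL2, fderiv_integral_logLikPartial_apply β hz hL2,
    logLikPartialGrad_apply_single_const]
  rw [integral_sub (hcov.const_mul _) (integrable_const _), integral_const_mul, ← hSig,
    integral_const, probReal_univ, one_smul]
  ring

/-- Hessian of the negative log-likelihood `L(μ) = -E_z[LSE_k(-(β/2)‖z-μ_k‖²)]`
at the symmetric collapsed state `μ_1 = ⋯ = μ_K = E[z]`:
`(β/K)δ_{kl}δ^{ab} - (β²/K)(δ_{kl} - 1/K)Σ^{ab}` where `Σ = Cov(z)`. -/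
theorem hessian_at_symmetric_state {Ω : Type*} [MeasurableSpace Ω]
    (P : Measure Ω) [IsProbabilityMeasure P]
    (d K : ℕ) (hK : 2 ≤ K) (β : ℝ) (hβ : 0 < β)
    (z : Ω → Fin d → ℝ) (hmeas : Measurable z)
    (hint1 : ∀ a, Integrable (fun ω => z ω a) P)
    (hint2 : ∀ a b, Integrable (fun ω => z ω a * z ω b) P)
    (zbar : Fin d → ℝ) (hzbar : ∀ a, zbar a = ∫ ω, z ω a ∂P)
    (Sig : Matrix (Fin d) (Fin d) ℝ)
    (hSig : ∀ a b, Sig a b = ∫ ω, (z ω a - zbar a) * (z ω b - zbar b) ∂P)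
    (k l : Fin K) (a b : Fin d) :
    fderiv ℝ (fun m : Fin K → Fin d → ℝ =>
        fderiv ℝ (fun m' : Fin K → Fin d → ℝ =>
            -∫ ω, Real.log (∑ j, Real.exp (-(β / 2) * ∑ i, (z ω i - m' j i) ^ 2)) ∂P) m
          (Pi.single k (Pi.single a 1)))
      (fun _ => zbar) (Pi.single l (Pi.single b 1))
      = (β / (K : ℝ)) * (if k = l then (1:ℝ) else 0) * (if a = b then (1:ℝ) else 0)
        - (β ^ 2 / (K : ℝ)) * ((if k = l then (1:ℝ) else 0) - 1 / (K : ℝ)) * Sig a b :=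
  hessian_at_symmetric_state_general P d K β z hint1 hint2 zbar Sig hSig k l a b
end

section
/- With H as above and λ_max = λ_max(Σ) > 0, the smallest eigenvalue of H restricted to the anti-symmetric channel is (β/K)(1 - β λ_max), which is positive for 0 < β < 1/λ_max, zero at β = 1/λ_max, and negative for β > 1/λ_max. -/
open scoped BigOperators

/-- The block Hessian `H_{kl} = (β/K)δ_{kl} I_d - (β²/K)(δ_{kl} - 1/K)Σ`,
acting blockwise on `ξ ∈ (ℝ^d)^K` by `(Hξ)_k = ∑_l H_{kl} ξ_l`. -/
noncomputable def Happly (K d : ℕ) (β : ℝ) (S : Matrix (Fin d) (Fin d) ℝ)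
    (ξ : Fin K → Fin d → ℝ) : Fin K → Fin d → ℝ :=
  fun k => ∑ l, (((β / (K : ℝ)) * (if k = l then (1:ℝ) else 0)) • ξ l
      - ((β ^ 2 / (K : ℝ)) * ((if k = l then (1:ℝ) else 0) - 1 / (K : ℝ))) • S.mulVec (ξ l))

/-!
On an anti-symmetric vector the coupling term `(β²/K²) Σ ∑_l ξ_l` vanishes, so `H` acts blockwise
as `(β/K) I - (β²/K) Σ`. Every nonzero block of an eigenvector is then an eigenvector of `Σ`, and an
eigenvalue `s` of `Σ` gives the eigenvalue `(β/K)(1 - β s)` of `H`; it is smallest for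
`s = λ_max`, where it is attained by `ξ_k = w_k u` with `∑ w_k = 0` and `Σ u = λ_max u`.
-/

open Matrix

theorem exists_ne_zero_sum_eq_zero {ι R : Type*} [Fintype ι] [Nontrivial ι]
    [AddCommGroup R] [Nontrivial R] : ∃ w : ι → R, w ≠ 0 ∧ ∑ i, w i = 0 := by
  classical
  obtain ⟨i, j, hij⟩ := exists_pair_ne ι
  obtain ⟨a, ha⟩ := exists_ne (0 : R)
  refine ⟨Pi.single i a - Pi.single j a, fun h => ha ?_, ?_⟩
  · simpa [hij] using congrFun h i
  · simp [Finset.sum_sub_distrib]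

theorem Happly_apply_of_sum_eq_zero {K d : ℕ} (β : ℝ) (S : Matrix (Fin d) (Fin d) ℝ)
    {ξ : Fin K → Fin d → ℝ} (hξ : ∑ k, ξ k = 0) (k : Fin K) :
    Happly K d β S ξ k = (β / K) • ξ k - (β ^ 2 / K) • S *ᵥ ξ k := by
  have hSξ : ∑ l, S *ᵥ ξ l = 0 := by
    rw [← mulVec_sum, hξ, mulVec_zero]
  simp only [Happly, Finset.sum_sub_distrib, mul_sub, sub_smul, mul_ite, mul_one, mul_zero,
    ite_smul, zero_smul, Finset.sum_ite_eq, Finset.mem_univ, if_true]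
  rw [← Finset.smul_sum, hSξ, smul_zero, sub_zero]

theorem Happly_smul_eigenvector {K d : ℕ} (β lam : ℝ) {S : Matrix (Fin d) (Fin d) ℝ}
    {w : Fin K → ℝ} (hw : ∑ k, w k = 0) {u : Fin d → ℝ} (hu : S *ᵥ u = lam • u) :
    Happly K d β S (fun k => w k • u) = (β / K * (1 - β * lam)) • fun k => w k • u := by
  have hsum : ∑ k, w k • u = 0 := by rw [← Finset.sum_smul, hw, zero_smul]
  funext k
  rw [Happly_apply_of_sum_eq_zero β S hsum, mulVec_smul, hu, Pi.smul_apply, smul_smul,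
    smul_smul, smul_smul, smul_smul, ← sub_smul]
  congr 1
  ring

theorem mulVec_eq_of_Happly_eq_smul {K d : ℕ} {β c : ℝ} (hβ : β ≠ 0) (hK : K ≠ 0)
    {S : Matrix (Fin d) (Fin d) ℝ} {ξ : Fin K → Fin d → ℝ} (hsum : ∑ k, ξ k = 0)
    (heig : Happly K d β S ξ = c • ξ) (k : Fin K) :
    S *ᵥ ξ k = ((β / K - c) / (β ^ 2 / K)) • ξ k := by
  have hk := congrFun heig k
  rw [Happly_apply_of_sum_eq_zero β S hsum, Pi.smul_apply, sub_eq_iff_eq_add'] at hk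
  have hscale : β ^ 2 / (K : ℝ) ≠ 0 := by positivity
  rw [div_eq_inv_mul, mul_smul, sub_smul, hk, add_sub_cancel_right, inv_smul_smul₀ hscale]

theorem le_of_Happly_eq_smul {K d : ℕ} {β lam c : ℝ} (hβ : 0 < β) (hK : 0 < K)
    {S : Matrix (Fin d) (Fin d) ℝ}
    (hmax : ∀ (s : ℝ) (u : Fin d → ℝ), u ≠ 0 → S *ᵥ u = s • u → s ≤ lam)
    {ξ : Fin K → Fin d → ℝ} (hξ : ξ ≠ 0) (hsum : ∑ k, ξ k = 0)
    (heig : Happly K d β S ξ = c • ξ) : β / K * (1 - β * lam) ≤ c := by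
  obtain ⟨k, hk⟩ := Function.ne_iff.mp hξ
  have hs := hmax _ _ hk (mulVec_eq_of_Happly_eq_smul hβ.ne' hK.ne' hsum heig k)
  rw [div_le_iff₀ (by positivity)] at hs
  linarith [show β / K * (1 - β * lam) = β / K - lam * (β ^ 2 / K) by ring]

theorem antisymmetric_smallest_eigenvalue_general (K d : ℕ) (hK : 2 ≤ K)
    (β lammax : ℝ) (hβ : 0 < β) (hlam : 0 < lammax)
    (S : Matrix (Fin d) (Fin d) ℝ)
    (hmaxeig : ∃ u : Fin d → ℝ, u ≠ 0 ∧ S.mulVec u = lammax • u)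
    (hmaxtop : ∀ (s : ℝ) (u : Fin d → ℝ), u ≠ 0 → S.mulVec u = s • u → s ≤ lammax) :
    (∃ ξ : Fin K → Fin d → ℝ, ξ ≠ 0 ∧ (∑ k, ξ k) = 0 ∧
        Happly K d β S ξ = ((β / (K : ℝ)) * (1 - β * lammax)) • ξ) ∧
    (∀ (c : ℝ) (ξ : Fin K → Fin d → ℝ), ξ ≠ 0 → (∑ k, ξ k) = 0 →
        Happly K d β S ξ = c • ξ → (β / (K : ℝ)) * (1 - β * lammax) ≤ c) ∧
    (β < 1 / lammax → 0 < (β / (K : ℝ)) * (1 - β * lammax)) ∧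
    (β = 1 / lammax → (β / (K : ℝ)) * (1 - β * lammax) = 0) ∧
    (1 / lammax < β → (β / (K : ℝ)) * (1 - β * lammax) < 0) := by
  have hscale : 0 < β / (K : ℝ) := by positivity
  obtain ⟨u, hu, hSu⟩ := hmaxeig
  have : Nontrivial (Fin K) := Fin.nontrivial_iff_two_le.mpr hK
  obtain ⟨w, hw, hwsum⟩ := exists_ne_zero_sum_eq_zero (ι := Fin K) (R := ℝ)
  obtain ⟨k, hk⟩ := Function.ne_iff.mp hw
  refine ⟨⟨fun k => w k • u, Function.ne_iff.mpr ⟨k, smul_ne_zero hk hu⟩, ?_,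
      Happly_smul_eigenvector β lammax hwsum hSu⟩,
    fun c ξ hξ hsum heig => le_of_Happly_eq_smul hβ (by omega) hmaxtop hξ hsum heig,
    fun h => mul_pos hscale ?_, fun h => ?_, fun h => mul_neg_of_pos_of_neg hscale ?_⟩
  · rw [← Finset.sum_smul, hwsum, zero_smul]
  · linarith [(lt_div_iff₀ hlam).mp h]
  · rw [h, one_div_mul_cancel hlam.ne', sub_self, mul_zero]
  · linarith [(div_lt_iff₀ hlam).mp h]

/-- The smallest eigenvalue of `H` on the anti-symmetric channel is
`(β/K)(1 - β λ_max)`: it is attained by an anti-symmetric eigenvector, every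
eigenvalue of `H` on the anti-symmetric channel is at least this value, and it
is positive for `β < 1/λ_max`, zero at `β = 1/λ_max`, and negative for
`β > 1/λ_max`. -/
theorem antisymmetric_smallest_eigenvalue (K d : ℕ) (hK : 2 ≤ K)
    (β lammax : ℝ) (hβ : 0 < β) (hlam : 0 < lammax)
    (S : Matrix (Fin d) (Fin d) ℝ) (hS : S.IsSymm) (hPSD : S.PosSemidef)
    (hmaxeig : ∃ u : Fin d → ℝ, u ≠ 0 ∧ S.mulVec u = lammax • u)
    (hmaxtop : ∀ (s : ℝ) (u : Fin d → ℝ), u ≠ 0 → S.mulVec u = s • u → s ≤ lammax) :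
    (∃ ξ : Fin K → Fin d → ℝ, ξ ≠ 0 ∧ (∑ k, ξ k) = 0 ∧
        Happly K d β S ξ = ((β / (K : ℝ)) * (1 - β * lammax)) • ξ) ∧
    (∀ (c : ℝ) (ξ : Fin K → Fin d → ℝ), ξ ≠ 0 → (∑ k, ξ k) = 0 →
        Happly K d β S ξ = c • ξ → (β / (K : ℝ)) * (1 - β * lammax) ≤ c) ∧
    (β < 1 / lammax → 0 < (β / (K : ℝ)) * (1 - β * lammax)) ∧
    (β = 1 / lammax → (β / (K : ℝ)) * (1 - β * lammax) = 0) ∧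
    (1 / lammax < β → (β / (K : ℝ)) * (1 - β * lammax) < 0) :=
  antisymmetric_smallest_eigenvalue_general K d hK β lammax hβ hlam S hmaxeig hmaxtop
end
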